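/- Let D be a finite set, R ⊆ D^n a nonempty n-ary relation, and 𝒟 = 𝒟(R) the digraph constructed from R. For any a ∈ D, any r = (r₁,…,rₙ) ∈ R, and any i ∈ {1,…,n}, there exists a digraph homomorphism from the oriented path Q_{{i}} to 𝒟 mapping the initial vertex of Q_{{i}} to a and the terminal vertex of Q_{{i}} to r if and only if a = r_i. -/

import Mathlib

open scoped NNRat

/-- A homomorphism between digraphs given by their edge relations. -/
def IsDigraphHom {V₁ V₂ : Type*} (E₁ : V₁ → V₁ → Prop) (E₂ : V₂ → V₂ → Prop)
    (h : V₁ → V₂) : Prop :=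
  ∀ a b, E₁ a b → E₂ (h a) (h b)

/-- Weak reachability (connectivity by oriented paths) in a digraph. -/
def WeakReach {V : Type*} (E : V → V → Prop) : V → V → Prop :=
  Relation.ReflTransGen fun a b => E a b ∨ E b a

/-- Edge relation of the direct power of a digraph. -/
def powEdge {V : Type*} (k : ℕ) (E : V → V → Prop) :
    (Fin k → V) → (Fin k → V) → Prop :=
  fun c d => ∀ i, E (c i) (d i)

/-- The directions of the edges of the oriented path `Q_S`: a single edge, then for
each `l` a single edge (if `l ∈ S`) or a zigzag (otherwise), then a single edge. -/
def QDirs (n : ℕ) (S : Finset (Fin n)) : List Bool :=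
  true :: (((List.finRange n).flatMap fun l =>
    if l ∈ S then [true] else [true, false, true]) ++ [true])

/-- The edge relation of the oriented path whose edge directions are given by `ds`;
its vertices are `0, …, ds.length`, `0` being initial and `ds.length` terminal. -/
def pathEdge (ds : List Bool) : Fin (ds.length + 1) → Fin (ds.length + 1) → Prop :=
  fun a b => ∃ i : Fin ds.length,
    if ds.get i = true then a = i.castSucc ∧ b = i.succ
    else a = i.succ ∧ b = i.castSucc

/-- The directions of the path `Q_{{i : d = r i}}` replacing the edge `(d, r)`. -/
def pathDirs {D : Type} [DecidableEq D] {n : ℕ} (d : D) (r : Fin n → D) : List Bool :=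
  QDirs n (Finset.univ.filter fun i => d = r i)

/-- Internal vertices of the copies of the paths `Q_{{i : d = r i}}` in `𝒟(R)`. -/
structure InnerVert (D : Type) [DecidableEq D] (n : ℕ) (R : Set (Fin n → D)) where
  d : D
  r : Fin n → D
  hr : r ∈ R
  j : ℕ
  hj0 : 0 < j
  hjlen : j < (pathDirs d r).length

/-- The vertex set of the digraph `𝒟(R)`: base vertices `D`, top vertices `R`, and
the internal vertices of the connecting oriented paths. -/
def DVert (D : Type) [DecidableEq D] (n : ℕ) (R : Set (Fin n → D)) : Type :=
  D ⊕ ({t : Fin n → D // t ∈ R} ⊕ InnerVert D n R)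

/-- The `j`-th vertex of the copy of the path `Q_{{i : d = t i}}` joining `d` to `t`. -/
def pathVert {D : Type} [DecidableEq D] {n : ℕ} {R : Set (Fin n → D)}
    (d : D) (t : Fin n → D) (ht : t ∈ R) (j : ℕ) : DVert D n R :=
  if hj0 : j = 0 then Sum.inl d
  else if hjl : (pathDirs d t).length ≤ j then Sum.inr (Sum.inl ⟨t, ht⟩)
  else Sum.inr (Sum.inr ⟨d, t, ht, j, Nat.pos_of_ne_zero hj0, not_le.mp hjl⟩)

/-- The edge relation of the digraph `𝒟(R)`. -/
def DEdge {D : Type} [DecidableEq D] {n : ℕ} {R : Set (Fin n → D)} :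
    DVert D n R → DVert D n R → Prop :=
  fun a b => ∃ (d : D) (t : Fin n → D) (ht : t ∈ R) (i : ℕ)
      (hi : i < (pathDirs d t).length),
    if (pathDirs d t).get ⟨i, hi⟩ = true then
      a = pathVert d t ht i ∧ b = pathVert d t ht (i + 1)
    else
      a = pathVert d t ht (i + 1) ∧ b = pathVert d t ht i

/-- A unary polymorphism of an `n`-ary relation `R`. -/
def IsUnaryPolymorphism {D : Type} {n : ℕ} (R : Set (Fin n → D)) (g : D → D) : Prop :=
  ∀ t ∈ R, (fun i => g (t i)) ∈ R

/-- The unary cost function `u` on the vertices of `𝒟(R)` associated to `ρ : R → ℚ≥0`. -/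
def uFun {D : Type} [DecidableEq D] {n : ℕ} {R : Set (Fin n → D)}
    (ρ : {t : Fin n → D // t ∈ R} → ℚ≥0) : DVert D n R → ℚ≥0 :=
  fun v => match v with
  | Sum.inl _ => 0
  | Sum.inr (Sum.inl t) => ρ t
  | Sum.inr (Sum.inr _) => 0

/-! Give every vertex of `𝒟(R)` a level: `0` on `D`, `n + 2` on `R`, and along each connecting
path the number of forward minus backward edges walked so far. Every edge goes up one level, so
a homomorphism `Q_{{i}} → 𝒟(R)` preserves levels, and the interior vertices of `Q_{{i}}`, at
levels `1, …, n + 1`, land on internal vertices of the connecting paths. These are adjacent only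
to vertices of their own path, so a homomorphism from `a` to `t` runs inside the copy of `Q_S`,
`S = {j : a = t j}`, and is an endpoint-preserving homomorphism `Q_{{i}} → Q_S`.

If `i ∈ S`, folding the zigzags `Q_{{i},l}` with `l ∈ S \ {i}` gives one. If `i ∉ S`, such a
homomorphism has to cross the backward edge of the zigzag `Q_{S,i}`, which ends at level
`i + 1`; it can only do so along a backward edge of `Q_{{i}}`, and those end at the levels
`l + 1` with `l ≠ i`. -/

lemma Nat.exists_le_lt_succ {α : Type*} [LinearOrder α] {g : ℕ → α} {k : α}
    {N : ℕ} (h0 : g 0 ≤ k) (hN : k < g N) : ∃ m < N, g m ≤ k ∧ k < g (m + 1) := by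
  induction N with
  | zero => exact absurd h0 (not_le.2 hN)
  | succ N ih =>
    by_cases hk : k < g N
    · obtain ⟨m, hm, hgm⟩ := ih hk
      exact ⟨m, by omega, hgm⟩
    · exact ⟨N, by omega, not_lt.1 hk, hN⟩

namespace OrientedPath

def level (ds : List Bool) (j : ℕ) : ℤ :=
  ((ds.take j).map fun b => if b then 1 else -1).sum

@[simp]
lemma level_zero (ds : List Bool) : level ds 0 = 0 := by
  simp [level]

@[simp]
lemma level_cons_succ (b : Bool) (ds : List Bool) (j : ℕ) :
    level (b :: ds) (j + 1) = (if b then 1 else -1) + level ds j := by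
  simp [level]

lemma level_of_length_le {ds : List Bool} {j : ℕ} (h : ds.length ≤ j) :
    level ds j = level ds ds.length := by
  simp [level, List.take_of_length_le h]

lemma level_append (l₁ l₂ : List Bool) (j : ℕ) :
    level (l₁ ++ l₂) j = level l₁ j + level l₂ (j - l₁.length) := by
  simp [level, List.take_append]

lemma level_succ_of_getElem? {ds : List Bool} {j : ℕ} {b : Bool} (h : ds[j]? = some b) :
    level ds (j + 1) = level ds j + if b then 1 else -1 := by
  simp [level, List.take_add_one, h]

def pathEdgeNat (ds : List Bool) (q q' : ℕ) : Prop :=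
  (ds[q]? = some true ∧ q' = q + 1) ∨ (ds[q']? = some false ∧ q = q' + 1)

lemma pathEdge_iff_pathEdgeNat {ds : List Bool} {x y : Fin (ds.length + 1)} :
    pathEdge ds x y ↔ pathEdgeNat ds x y := by
  constructor
  · rintro ⟨i, hi⟩
    split_ifs at hi with hb
    · obtain ⟨rfl, rfl⟩ := hi
      exact Or.inl ⟨by simpa using hb, rfl⟩
    · obtain ⟨rfl, rfl⟩ := hi
      exact Or.inr ⟨by simpa using hb, rfl⟩
  · rintro (⟨hx, hy⟩ | ⟨hy, hx⟩)
    · obtain ⟨hlt, hget⟩ := List.getElem?_eq_some_iff.1 hx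
      refine ⟨⟨x, hlt⟩, ?_⟩
      rw [if_pos (by simpa using hget)]
      exact ⟨rfl, Fin.ext hy⟩
    · obtain ⟨hlt, hget⟩ := List.getElem?_eq_some_iff.1 hy
      refine ⟨⟨y, hlt⟩, ?_⟩
      rw [if_neg (by simp [hget])]
      exact ⟨Fin.ext hx, rfl⟩

lemma pathEdgeNat.le_length {ds : List Bool} {q q' : ℕ} (h : pathEdgeNat ds q q') :
    q ≤ ds.length ∧ q' ≤ ds.length := by
  rcases h with ⟨h, rfl⟩ | ⟨h, rfl⟩ <;>
    have := (List.getElem?_eq_some_iff.1 h).1 <;> omega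

lemma pathEdgeNat.level_eq {ds : List Bool} {q q' : ℕ} (h : pathEdgeNat ds q q') :
    level ds q' = level ds q + 1 := by
  rcases h with ⟨h, rfl⟩ | ⟨h, rfl⟩
  · simpa using level_succ_of_getElem? h
  · rw [level_succ_of_getElem? h]; simp

lemma pathEdgeNat_succ_or {ds : List Bool} {y : ℕ} (hy : y < ds.length) :
    pathEdgeNat ds y (y + 1) ∨ pathEdgeNat ds (y + 1) y := by
  cases hb : ds[y] with
  | true => exact Or.inl (Or.inl ⟨by simp [List.getElem?_eq_getElem hy, hb], rfl⟩)
  | false => exact Or.inr (Or.inr ⟨by simp [List.getElem?_eq_getElem hy, hb], rfl⟩)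

lemma isDigraphHom_pathEdgeNat_clamp {ds : List Bool} {V : Type*} {E : V → V → Prop}
    {h : Fin (ds.length + 1) → V} (hh : IsDigraphHom (pathEdge ds) E h) :
    IsDigraphHom (pathEdgeNat ds) E fun y => h (Fin.clamp y ds.length) := by
  intro x y hxy
  obtain ⟨hx, hy⟩ := hxy.le_length
  apply hh
  rw [pathEdge_iff_pathEdgeNat]
  simpa [Fin.coe_clamp, hx, hy] using hxy

lemma level_comp_of_isDigraphHom {ds : List Bool} {V : Type*} {E : V → V → Prop}
    (ℓ : V → ℤ) (hℓ : ∀ u v, E u v → ℓ v = ℓ u + 1) {h : ℕ → V}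
    (hh : IsDigraphHom (pathEdgeNat ds) E h) :
    ∀ y ≤ ds.length, ℓ (h y) = ℓ (h 0) + level ds y := by
  intro y
  induction y with
  | zero => simp
  | succ y ih =>
    intro hy
    rcases pathEdgeNat_succ_or (ds := ds) (y := y) (by omega) with e | e
    · rw [hℓ _ _ (hh _ _ e), ih (by omega), e.level_eq]; ring
    · have := hℓ _ _ (hh _ _ e)
      rw [ih (by omega), e.level_eq] at this; linarith

inductive Folds : List Bool → List Bool → Prop
  | nil : Folds [] []
  | cons (b : Bool) {V W : List Bool} : Folds V W → Folds (b :: V) (b :: W)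
  | zigzag {V W : List Bool} : Folds V W → Folds (true :: false :: true :: V) (true :: W)

namespace Folds

lemma refl : ∀ V : List Bool, Folds V V
  | [] => nil
  | b :: V => cons b (refl V)

lemma append {V₁ W₁ V₂ W₂ : List Bool} (h₁ : Folds V₁ W₁) (h₂ : Folds V₂ W₂) :
    Folds (V₁ ++ V₂) (W₁ ++ W₂) := by
  induction h₁ with
  | nil => exact h₂
  | cons b _ ih => exact cons b ih
  | zigzag _ ih => exact zigzag ih

lemma flatMap {α : Type*} {f g : α → List Bool} :
    ∀ {ls : List α}, (∀ l ∈ ls, Folds (f l) (g l)) → Folds (ls.flatMap f) (ls.flatMap g)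
  | [], _ => nil
  | l :: _, h => (h l (by simp)).append (flatMap fun l' hl' => h l' (by simp [hl']))

lemma pathEdgeNat_cons_iff {b : Bool} {V : List Bool} {x y : ℕ} :
    pathEdgeNat (b :: V) x y ↔ (x = 0 ∧ y = 1 ∧ b = true) ∨ (x = 1 ∧ y = 0 ∧ b = false) ∨
      ∃ x' y', x = x' + 1 ∧ y = y' + 1 ∧ pathEdgeNat V x' y' := by
  rcases x with _ | x <;> rcases y with _ | y <;> simp [pathEdgeNat, and_comm]

lemma exists_hom {V W : List Bool} (h : Folds V W) :
    ∃ g : ℕ → ℕ, IsDigraphHom (pathEdgeNat V) (pathEdgeNat W) g ∧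
      g 0 = 0 ∧ g V.length = W.length := by
  induction h with
  | nil => exact ⟨id, fun _ _ e => e, rfl, rfl⟩
  | cons b _ ih =>
    obtain ⟨g, hg, hg0, hgl⟩ := ih
    refine ⟨fun | 0 => 0 | x + 1 => g x + 1, ?_, rfl, by simp [hgl]⟩
    intro x y e
    simp only [pathEdgeNat_cons_iff] at e ⊢
    rcases e with ⟨rfl, rfl, hb⟩ | ⟨rfl, rfl, hb⟩ | ⟨x, y, rfl, rfl, e⟩
    all_goals simp_all [IsDigraphHom]
  | zigzag _ ih =>
    obtain ⟨g, hg, hg0, hgl⟩ := ih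
    refine ⟨fun | 0 => 0 | 1 => 1 | 2 => 0 | x + 3 => g x + 1, ?_, rfl, by simp [hgl]⟩
    intro x y e
    simp only [pathEdgeNat_cons_iff] at e ⊢
    rcases e with ⟨rfl, rfl, h⟩ | ⟨rfl, rfl, h⟩ | ⟨x, y, rfl, rfl, ⟨rfl, rfl, h⟩ | ⟨rfl, rfl, h⟩ |
      ⟨x, y, rfl, rfl, ⟨rfl, rfl, h⟩ | ⟨rfl, rfl, h⟩ | ⟨x, y, rfl, rfl, e⟩⟩⟩
    all_goals simp_all [IsDigraphHom]

end Folds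

end OrientedPath

open OrientedPath

section QDirs

variable {n : ℕ} (S : Finset (Fin n))

def qBlock (l : Fin n) : List Bool :=
  if l ∈ S then [true] else [true, false, true]

lemma QDirs_eq : QDirs n S = true :: ((List.finRange n).flatMap (qBlock S) ++ [true]) := rfl

lemma QDirs_length :
    (QDirs n S).length = ((List.finRange n).flatMap (qBlock S)).length + 2 := by
  simp [QDirs_eq]

lemma level_qBlock_of_length_le (l : Fin n) {j : ℕ} (hj : (qBlock S l).length ≤ j) :
    level (qBlock S l) j = 1 := by
  unfold qBlock at hj ⊢
  split_ifs at hj ⊢ <;> simp [level, List.take_of_length_le hj]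

lemma level_qBlock_mem_Icc (l : Fin n) (j : ℕ) : level (qBlock S l) j ∈ Set.Icc 0 1 := by
  unfold qBlock
  split_ifs
  · rcases j with _ | j <;> simp [level]
  · rcases j with _ | _ | _ | j <;> simp [level]

variable {S}

lemma level_flatMap_qBlock_mem_Icc (ls : List (Fin n)) (j : ℕ) :
    level (ls.flatMap (qBlock S)) j ∈ Set.Icc 0 (ls.length : ℤ) := by
  induction ls generalizing j with
  | nil => simp [level]
  | cons l ls ih =>
    rw [List.flatMap_cons, level_append]
    have hl := level_qBlock_mem_Icc S l j
    rcases le_or_gt (qBlock S l).length j with hj | hj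
    · have := ih (j - (qBlock S l).length)
      simp only [Set.mem_Icc, List.length_cons, level_qBlock_of_length_le S l hj] at this ⊢
      push_cast; constructor <;> linarith [this.1, this.2]
    · rw [Nat.sub_eq_zero_of_le hj.le, level_zero]
      simp only [Set.mem_Icc, List.length_cons] at hl ⊢
      push_cast; constructor <;> linarith [hl.1, hl.2]

lemma level_flatMap_qBlock_length (ls : List (Fin n)) :
    level (ls.flatMap (qBlock S)) (ls.flatMap (qBlock S)).length = ls.length := by
  induction ls with
  | nil => simp [level]
  | cons l ls ih =>
    rw [List.flatMap_cons, level_append, level_qBlock_of_length_le S l (by simp), List.length_append,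
      Nat.add_sub_cancel_left, ih]
    simp; ring

lemma exists_backward_flatMap_qBlock_iff (ls : List (Fin n)) (p : ℕ) :
    (∃ k, (ls.flatMap (qBlock S))[k]? = some false ∧
        level (ls.flatMap (qBlock S)) (k + 1) = p) ↔ ∃ l ∉ S, ls[p]? = some l := by
  induction ls generalizing p with
  | nil => simp
  | cons l ls ih =>
    simp only [List.flatMap_cons]
    constructor
    · rintro ⟨k, hk, hlev⟩
      rw [level_append] at hlev
      rcases lt_or_ge k (qBlock S l).length with hkB | hkB
      · rw [List.getElem?_append_left hkB] at hk
        unfold qBlock at hk hkB hlev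
        split_ifs at hk hkB hlev with hl
        · rcases k with _ | k <;> simp at hk
        · rcases k with _ | _ | _ | k <;> simp at hk hkB
          obtain rfl : p = 0 := by simpa [level] using hlev.symm
          exact ⟨l, hl, rfl⟩
      · rw [List.getElem?_append_right hkB] at hk
        rw [level_qBlock_of_length_le S l (by omega), Nat.sub_add_comm hkB] at hlev
        obtain ⟨p, rfl⟩ : ∃ p', p = p' + 1 := by
          have := (level_flatMap_qBlock_mem_Icc (S := S) ls (k - (qBlock S l).length + 1)).1
          exact ⟨p - 1, by omega⟩
        obtain ⟨l', hl', hp⟩ := (ih p).1 ⟨_, hk, by push_cast at hlev; linarith⟩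
        exact ⟨l', hl', by simpa using hp⟩
    · rintro ⟨l', hl', hp⟩
      rcases p with _ | p
      · obtain rfl : l = l' := by simpa using hp
        refine ⟨1, ?_, ?_⟩ <;> simp [qBlock, hl', level]
      · obtain ⟨k, hk, hlev⟩ := (ih p).2 ⟨l', hl', by simpa using hp⟩
        refine ⟨(qBlock S l).length + k, ?_, ?_⟩
        · rw [List.getElem?_append_right (by omega), Nat.add_sub_cancel_left, hk]
        · rw [level_append, level_qBlock_of_length_le S l (by omega), add_assoc,
            Nat.add_sub_cancel_left, hlev]
          push_cast; ring

lemma level_QDirs_length : level (QDirs n S) (QDirs n S).length = n + 2 := by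
  rw [QDirs_length, QDirs_eq, level_cons_succ, if_pos rfl, level_append,
    level_of_length_le (Nat.le_succ _), level_flatMap_qBlock_length]
  simp [level]; ring

lemma level_QDirs_mem_Icc {j : ℕ} (hj0 : 0 < j) (hj : j < (QDirs n S).length) :
    level (QDirs n S) j ∈ Set.Icc 1 ((n : ℤ) + 1) := by
  obtain ⟨j, rfl⟩ := Nat.exists_eq_add_of_le' hj0
  rw [QDirs_length] at hj
  have := level_flatMap_qBlock_mem_Icc (S := S) (List.finRange n) j
  rw [QDirs_eq, level_cons_succ, if_pos rfl, level_append, Nat.sub_eq_zero_of_le (by omega),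
    level_zero]
  simp only [Set.mem_Icc, List.length_finRange] at this ⊢
  constructor <;> linarith [this.1, this.2]

lemma exists_backward_QDirs_iff (l : Fin n) :
    (∃ k, (QDirs n S)[k]? = some false ∧ level (QDirs n S) (k + 1) = l + 1) ↔ l ∉ S := by
  have key := exists_backward_flatMap_qBlock_iff (S := S) (List.finRange n) l
  rw [List.getElem?_eq_getElem (by simp), List.getElem_finRange] at key
  simp only [Fin.cast_mk, Fin.eta, Option.some.injEq, exists_eq_right'] at key
  rw [← key, QDirs_eq]
  set F := (List.finRange n).flatMap (qBlock S)
  constructor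
  · rintro ⟨_ | k, hk, hlev⟩
    · simp at hk
    rw [List.getElem?_cons_succ] at hk
    have hkF : k < F.length := by
      by_contra hkF
      rw [List.getElem?_append_right (by omega)] at hk
      rcases h : k - F.length with _ | _ <;> simp [h] at hk
    rw [List.getElem?_append_left hkF] at hk
    rw [level_cons_succ, if_pos rfl, level_append, Nat.sub_eq_zero_of_le hkF, level_zero] at hlev
    exact ⟨k, hk, by linarith⟩
  · rintro ⟨k, hk, hlev⟩
    have hkF : k < F.length := (List.getElem?_eq_some_iff.1 hk).1
    refine ⟨k + 1, by simpa [List.getElem?_append_left hkF] using hk, ?_⟩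
    rw [level_cons_succ, if_pos rfl, level_append, Nat.sub_eq_zero_of_le hkF, level_zero, hlev]
    ring

lemma folds_QDirs_singleton {i : Fin n} (hi : i ∈ S) : Folds (QDirs n {i}) (QDirs n S) := by
  rw [QDirs_eq, QDirs_eq]
  refine .cons true (.append (.flatMap fun l _ => ?_) (.refl _))
  by_cases hl : l = i
  · subst hl
    simpa [qBlock, hi] using Folds.refl [true]
  · by_cases hlS : l ∈ S
    · simpa [qBlock, hl, hlS] using Folds.zigzag Folds.nil
    · simpa [qBlock, hl, hlS] using Folds.refl [true, false, true]

theorem exists_pathHom_QDirs_singleton_iff {i : Fin n} :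
    (∃ g : ℕ → ℕ, IsDigraphHom (pathEdgeNat (QDirs n {i})) (pathEdgeNat (QDirs n S)) g ∧
      g 0 = 0 ∧ g (QDirs n {i}).length = (QDirs n S).length) ↔ i ∈ S := by
  refine ⟨fun ⟨g, hg, hg0, hgl⟩ => ?_, fun hi => (folds_QDirs_singleton hi).exists_hom⟩
  by_contra hi
  obtain ⟨k, hk, hlev⟩ := (exists_backward_QDirs_iff i).2 hi
  have hkW : k < (QDirs n S).length := (List.getElem?_eq_some_iff.1 hk).1
  obtain ⟨m, hm, hgm, hgm1⟩ :=
    Nat.exists_le_lt_succ (g := g) (k := k) (N := (QDirs n {i}).length) (by omega) (by omega)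
  have hlevV := level_comp_of_isDigraphHom (level (QDirs n S)) (fun _ _ e => e.level_eq) hg
    (m + 1) hm
  rw [hg0, level_zero, zero_add] at hlevV
  rcases pathEdgeNat_succ_or hm with e | e
  · rcases hg _ _ e with ⟨hW, hsucc⟩ | ⟨_, hpred⟩
    · obtain rfl : g m = k := by omega
      simp [hk] at hW
    · omega
  · rcases hg _ _ e with ⟨_, hpred⟩ | ⟨_, hsucc⟩
    · omega
    obtain rfl : g m = k := by omega
    rcases e with ⟨_, hm'⟩ | ⟨hV, -⟩
    · omega
    refine (exists_backward_QDirs_iff (S := {i}) i).1 ⟨m, hV, ?_⟩ (Finset.mem_singleton_self i)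
    rw [← hlevV, hsucc, hlev]

end QDirs

section DigraphOfRelation

variable {D : Type} [DecidableEq D] {n : ℕ} {R : Set (Fin n → D)}

lemma two_le_length_pathDirs (d : D) (r : Fin n → D) : 2 ≤ (pathDirs d r).length := by
  simp [pathDirs, QDirs_length]

@[simp]
lemma pathVert_zero (d : D) (r : Fin n → D) (hr : r ∈ R) :
    pathVert d r hr 0 = Sum.inl d := rfl

lemma pathVert_of_length_le {d : D} {r : Fin n → D} (hr : r ∈ R) {q : ℕ}
    (hq : (pathDirs d r).length ≤ q) : pathVert d r hr q = Sum.inr (Sum.inl ⟨r, hr⟩) := by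
  have := two_le_length_pathDirs d r
  exact (dif_neg (by omega)).trans (dif_pos hq)

lemma pathVert_of_pos_of_lt {d : D} {r : Fin n → D} (hr : r ∈ R) {q : ℕ} (hq0 : 0 < q)
    (hq : q < (pathDirs d r).length) :
    pathVert d r hr q = Sum.inr (Sum.inr ⟨d, r, hr, q, hq0, hq⟩) := by
  exact (dif_neg (by omega)).trans (dif_neg (by omega))

lemma pathVert_eq_pathVert_of_pos_of_lt {d d' : D} {r r' : Fin n → D} {hr : r ∈ R}
    {hr' : r' ∈ R} {p q : ℕ} (hp0 : 0 < p) (hp : p < (pathDirs d r).length)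
    (h : pathVert d r hr p = pathVert d' r' hr' q) : d = d' ∧ r = r' ∧ p = q := by
  rw [pathVert_of_pos_of_lt hr hp0 hp] at h
  rcases Nat.eq_zero_or_pos q with rfl | hq0
  · cases h
  rcases lt_or_ge q (pathDirs d' r').length with hq | hq
  · rw [pathVert_of_pos_of_lt hr' hq0 hq] at h
    cases h
    exact ⟨rfl, rfl, rfl⟩
  · rw [pathVert_of_length_le hr' hq] at h
    cases h

lemma pathVert_injOn {d : D} {r : Fin n → D} {hr : r ∈ R} {q q' : ℕ}
    (hq : q ≤ (pathDirs d r).length) (hq' : q' ≤ (pathDirs d r).length)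
    (h : pathVert d r hr q = pathVert d r hr q') : q = q' := by
  rcases Nat.eq_zero_or_pos q with rfl | hq0
  · rcases Nat.eq_zero_or_pos q' with rfl | hq'0
    · rfl
    rcases hq'.lt_or_eq with hq' | hq'
    · exact ((pathVert_eq_pathVert_of_pos_of_lt hq'0 hq' h.symm).2.2).symm
    · rw [pathVert_zero, pathVert_of_length_le hr hq'.ge] at h
      cases h
  rcases hq.lt_or_eq with hq | rfl
  · exact (pathVert_eq_pathVert_of_pos_of_lt hq0 hq h).2.2
  rcases Nat.eq_zero_or_pos q' with rfl | hq'0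
  · rw [pathVert_zero, pathVert_of_length_le hr le_rfl] at h
    cases h
  rcases hq'.lt_or_eq with hq' | hq'
  · exact ((pathVert_eq_pathVert_of_pos_of_lt hq'0 hq' h.symm).2.2).symm
  · exact hq'.symm

lemma DEdge_iff {u v : DVert D n R} :
    DEdge u v ↔ ∃ (d : D) (r : Fin n → D) (hr : r ∈ R) (q q' : ℕ),
      pathEdgeNat (pathDirs d r) q q' ∧ u = pathVert d r hr q ∧ v = pathVert d r hr q' := by
  constructor
  · rintro ⟨d, r, hr, i, hi, hif⟩
    have hget := List.getElem?_eq_getElem hi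
    split_ifs at hif with hb <;> simp only [List.get_eq_getElem] at hb
    · exact ⟨d, r, hr, i, i + 1, Or.inl ⟨by rw [hget, hb], rfl⟩, hif⟩
    · exact ⟨d, r, hr, i + 1, i, Or.inr ⟨by simp [hget, hb], rfl⟩, hif⟩
  · rintro ⟨d, r, hr, q, q', ⟨h, rfl⟩ | ⟨h, rfl⟩, rfl, rfl⟩
    · obtain ⟨hq, hget⟩ := List.getElem?_eq_some_iff.1 h
      exact ⟨d, r, hr, q, hq, by simp [hget]⟩
    · obtain ⟨hq, hget⟩ := List.getElem?_eq_some_iff.1 h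
      exact ⟨d, r, hr, q', hq, by simp [hget]⟩

def vertLevel : DVert D n R → ℤ
  | Sum.inl _ => 0
  | Sum.inr (Sum.inl _) => n + 2
  | Sum.inr (Sum.inr w) => level (pathDirs w.d w.r) w.j

lemma vertLevel_pathVert (d : D) {r : Fin n → D} (hr : r ∈ R) {q : ℕ}
    (hq : q ≤ (pathDirs d r).length) : vertLevel (pathVert d r hr q) = level (pathDirs d r) q := by
  rcases Nat.eq_zero_or_pos q with rfl | hq0
  · simp [vertLevel]
  rcases hq.lt_or_eq with hq | rfl
  · rw [pathVert_of_pos_of_lt hr hq0 hq]; rfl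
  · rw [pathVert_of_length_le hr le_rfl, pathDirs, level_QDirs_length]; rfl

lemma vertLevel_of_DEdge {u v : DVert D n R} (h : DEdge u v) :
    vertLevel v = vertLevel u + 1 := by
  obtain ⟨d, r, hr, q, q', e, rfl, rfl⟩ := DEdge_iff.1 h
  rw [vertLevel_pathVert d hr e.le_length.1, vertLevel_pathVert d hr e.le_length.2, e.level_eq]

lemma pathVert_eq_inl {d a : D} {r : Fin n → D} {hr : r ∈ R} {q : ℕ}
    (h : pathVert d r hr q = Sum.inl a) : q = 0 ∧ d = a := by
  rcases Nat.eq_zero_or_pos q with rfl | hq0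
  · exact ⟨rfl, Sum.inl.inj h⟩
  rcases lt_or_ge q (pathDirs d r).length with hq | hq
  · rw [pathVert_of_pos_of_lt hr hq0 hq] at h
    cases h
  · rw [pathVert_of_length_le hr hq] at h
    cases h

lemma pathVert_eq_top {d : D} {r : Fin n → D} {hr : r ∈ R} {q : ℕ} {s : Fin n → D}
    {hs : s ∈ R} (hq : q ≤ (pathDirs d r).length)
    (h : pathVert d r hr q = Sum.inr (Sum.inl ⟨s, hs⟩)) : q = (pathDirs d r).length ∧ r = s := by
  rcases Nat.eq_zero_or_pos q with rfl | hq0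
  · cases h
  rcases hq.lt_or_eq with hq | rfl
  · rw [pathVert_of_pos_of_lt hr hq0 hq] at h
    cases h
  · rw [pathVert_of_length_le hr le_rfl] at h
    cases h
    exact ⟨rfl, rfl⟩

lemma DEdge_pathVert_iff {d : D} {r : Fin n → D} {hr : r ∈ R} {q q' : ℕ}
    (hq : q ≤ (pathDirs d r).length) (hq' : q' ≤ (pathDirs d r).length) :
    DEdge (pathVert d r hr q) (pathVert d r hr q') ↔ pathEdgeNat (pathDirs d r) q q' := by
  refine ⟨fun h => ?_, fun e => DEdge_iff.2 ⟨d, r, hr, q, q', e, rfl, rfl⟩⟩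
  obtain ⟨d', r', hr', p, p', e, hu, hv⟩ := DEdge_iff.1 h
  have := two_le_length_pathDirs d' r'
  have := e.le_length
  have hp' : p' = p + 1 ∨ p = p' + 1 := by rcases e with ⟨-, h⟩ | ⟨-, h⟩ <;> omega
  rcases (by omega : (0 < p ∧ p < (pathDirs d' r').length) ∨
      (0 < p' ∧ p' < (pathDirs d' r').length)) with ⟨hp0, hp⟩ | ⟨hp0, hp⟩
  · obtain ⟨rfl, rfl, rfl⟩ := pathVert_eq_pathVert_of_pos_of_lt hp0 hp hu.symm
    rwa [pathVert_injOn hq' this.2 hv]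
  · obtain ⟨rfl, rfl, rfl⟩ := pathVert_eq_pathVert_of_pos_of_lt hp0 hp hv.symm
    rwa [pathVert_injOn hq this.1 hu]

lemma exists_pathVert_of_adj_inl {a : D} {v : DVert D n R}
    (h : DEdge (Sum.inl a) v ∨ DEdge v (Sum.inl a)) : ∃ r hr, v = pathVert a r hr 1 := by
  rcases h with h | h <;> obtain ⟨d, r, hr, q, q', e, hu, hv⟩ := DEdge_iff.1 h
  · obtain ⟨rfl, rfl⟩ := pathVert_eq_inl hu.symm
    rcases e with ⟨-, rfl⟩ | ⟨-, h⟩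
    · exact ⟨r, hr, hv⟩
    · omega
  · obtain ⟨rfl, rfl⟩ := pathVert_eq_inl hv.symm
    rcases e with ⟨-, h⟩ | ⟨-, rfl⟩
    · omega
    · exact ⟨r, hr, hu⟩

lemma exists_pathVert_of_adj_pathVert {d : D} {r : Fin n → D} {hr : r ∈ R} {q : ℕ}
    (hq0 : 0 < q) (hq : q < (pathDirs d r).length) {v : DVert D n R}
    (h : DEdge (pathVert d r hr q) v ∨ DEdge v (pathVert d r hr q)) :
    ∃ q' ≤ (pathDirs d r).length, v = pathVert d r hr q' := by
  rcases h with h | h <;> obtain ⟨d', r', hr', p, p', e, hu, hv⟩ := DEdge_iff.1 h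
  · obtain ⟨rfl, rfl, rfl⟩ := pathVert_eq_pathVert_of_pos_of_lt hq0 hq hu
    exact ⟨p', e.le_length.2, hv⟩
  · obtain ⟨rfl, rfl, rfl⟩ := pathVert_eq_pathVert_of_pos_of_lt hq0 hq hv
    exact ⟨p, e.le_length.1, hu⟩

variable {S : Finset (Fin n)} {a : D} {H : ℕ → DVert D n R}

lemma exists_pathVert_of_isDigraphHom (hH : IsDigraphHom (pathEdgeNat (QDirs n S)) DEdge H)
    (h0 : H 0 = Sum.inl a) :
    ∃ r hr, ∀ y ≤ (QDirs n S).length, ∃ q ≤ (pathDirs a r).length, H y = pathVert a r hr q := by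
  have hlev : ∀ y ≤ (QDirs n S).length, vertLevel (H y) = level (QDirs n S) y := by
    simpa [h0, vertLevel] using
      level_comp_of_isDigraphHom vertLevel (fun _ _ => vertLevel_of_DEdge) hH
  have hV := QDirs_length S
  have hadj : ∀ y < (QDirs n S).length, DEdge (H y) (H (y + 1)) ∨ DEdge (H (y + 1)) (H y) :=
    fun y hy => (pathEdgeNat_succ_or hy).imp (hH _ _) (hH _ _)
  obtain ⟨r, hr, h1⟩ := exists_pathVert_of_adj_inl (h0 ▸ hadj 0 (by omega))
  have hW := two_le_length_pathDirs a r
  refine ⟨r, hr, fun y => ?_⟩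
  induction y with
  | zero => exact fun _ => ⟨0, by omega, h0⟩
  | succ y ih =>
    intro hy
    rcases Nat.eq_zero_or_pos y with rfl | hy0
    · exact ⟨1, by omega, h1⟩
    obtain ⟨q, hq, hHy⟩ := ih (by omega)
    have hq_lev := level_QDirs_mem_Icc (S := S) hy0 (by omega)
    rw [← hlev y (by omega), hHy, vertLevel_pathVert a hr hq] at hq_lev
    have hq0 : 0 < q := by
      rcases Nat.eq_zero_or_pos q with rfl | h
      · simp at hq_lev
      · exact h
    have hqW : q < (pathDirs a r).length := by
      refine hq.lt_of_ne fun hqW => ?_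
      rw [hqW, pathDirs, level_QDirs_length] at hq_lev
      simp at hq_lev
    exact exists_pathVert_of_adj_pathVert hq0 hqW (hHy ▸ hadj y (by omega))

lemma exists_pathHom_of_isDigraphHom {t : Fin n → D} {ht : t ∈ R}
    (hH : IsDigraphHom (pathEdgeNat (QDirs n S)) DEdge H) (h0 : H 0 = Sum.inl a)
    (hlast : H (QDirs n S).length = Sum.inr (Sum.inl ⟨t, ht⟩)) :
    ∃ g : ℕ → ℕ, IsDigraphHom (pathEdgeNat (QDirs n S)) (pathEdgeNat (pathDirs a t)) g ∧
      g 0 = 0 ∧ g (QDirs n S).length = (pathDirs a t).length := by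
  obtain ⟨r, hr, hpos⟩ := exists_pathVert_of_isDigraphHom hH h0
  choose! g hgW hg using hpos
  obtain ⟨hglast, rfl⟩ := pathVert_eq_top (hgW _ le_rfl) ((hg _ le_rfl).symm.trans hlast)
  refine ⟨g, fun x y e => ?_, (pathVert_eq_inl ((hg 0 (by omega)).symm.trans h0)).1, hglast⟩
  obtain ⟨hx, hy⟩ := e.le_length
  rw [← DEdge_pathVert_iff (hr := hr) (hgW x hx) (hgW y hy), ← hg x hx, ← hg y hy]
  exact hH x y e

end DigraphOfRelation

theorem hom_Qsingleton_iff_general {D : Type} [DecidableEq D] {n : ℕ}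
    (R : Set (Fin n → D))
    (a : D) (t : Fin n → D) (ht : t ∈ R) (i : Fin n) :
    (∃ h : Fin ((QDirs n {i}).length + 1) → DVert D n R,
        IsDigraphHom (pathEdge (QDirs n {i})) DEdge h ∧
        h 0 = Sum.inl a ∧ h (Fin.last _) = Sum.inr (Sum.inl ⟨t, ht⟩)) ↔
      a = t i := by
  have hpathDirs : pathDirs a t = QDirs n (Finset.univ.filter fun j => a = t j) := rfl
  rw [show a = t i ↔ i ∈ Finset.univ.filter (fun j => a = t j) by simp,
    ← exists_pathHom_QDirs_singleton_iff, ← hpathDirs]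
  constructor
  · rintro ⟨h, hh, h0, hlast⟩
    exact exists_pathHom_of_isDigraphHom (isDigraphHom_pathEdgeNat_clamp hh) h0
      (by rwa [Fin.clamp_eq_last _ _ le_rfl])
  · rintro ⟨g, hg, hg0, hglast⟩
    refine ⟨fun y => pathVert a t ht (g y), fun x y e => DEdge_iff.2
      ⟨a, t, ht, _, _, hg _ _ (pathEdge_iff_pathEdgeNat.1 e), rfl, rfl⟩, ?_, ?_⟩
    · simp only [Fin.val_zero, hg0]; rfl
    · simp only [Fin.val_last, hglast]
      exact pathVert_of_length_le ht le_rfl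

/-- there is a homomorphism from `Q_{{i}}` to `𝒟(R)` sending the initial
vertex to `a ∈ D` and the terminal vertex to `r ∈ R` iff `a = r i`. -/
theorem hom_Qsingleton_iff {D : Type} [Fintype D] [DecidableEq D] {n : ℕ}
    (hn : 1 ≤ n) (R : Set (Fin n → D)) (hR : R.Nonempty)
    (a : D) (t : Fin n → D) (ht : t ∈ R) (i : Fin n) :
    (∃ h : Fin ((QDirs n {i}).length + 1) → DVert D n R,
        IsDigraphHom (pathEdge (QDirs n {i})) DEdge h ∧
        h 0 = Sum.inl a ∧ h (Fin.last _) = Sum.inr (Sum.inl ⟨t, ht⟩)) ↔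
      a = t i :=
  hom_Qsingleton_iff_general R a t ht i
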